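/- Let V be a complex vector space with basis v_1, ..., v_k and a symmetric bilinear form. Equip the n-th symmetric power S^n(V) with the induced bilinear form defined on monomials by (v_{i_1}···v_{i_n}, v_{j_1}···v_{j_n}) = Σ_{σ ∈ S_n} Π_{a=1}^n (v_{i_a}, v_{j_{σ(a)}}). Let M_{n,v} denote the Gram matrix of the monomial basis {v_{i_1}···v_{i_n} : 1 ≤ i_1 ≤ ... ≤ i_n ≤ k} of S^n(V), and M_v the Gram matrix of v_1,...,v_k. Then there exists a constant c(n,k), depending only on n and k (not on V or the form), such that det M_{n,v} = c(n,k) · (det M_v)^{C(n+k-1, k)}. -/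

import Mathlib

open Finset Matrix

instance stmtDecMonotone (n k : ℕ) :
    DecidablePred (Monotone : (Fin n → Fin k) → Prop) := fun f =>
  decidable_of_iff (∀ a b, a ≤ b → f a ≤ f b) ⟨fun h _ _ hab => h _ _ hab, fun h _ _ hab => h hab⟩

namespace SPaux

variable {n k : ℕ}

abbrev Mono (n k : ℕ) := {f : Fin n → Fin k // Monotone f}

def srt (P : Fin n → Fin k) : Mono n k := ⟨P ∘ Tuple.sort P, Tuple.monotone_sort P⟩

lemma srt_comp (P : Fin n → Fin k) (τ : Equiv.Perm (Fin n)) : srt (P ∘ τ) = srt P :=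
  Subtype.ext (Tuple.comp_perm_comp_sort_eq_comp_sort)

lemma srt_idem (I : Mono n k) : srt I.1 = I := by
  apply Subtype.ext
  have h := Tuple.unique_monotone (f := I.1) (σ := Tuple.sort I.1) (τ := Equiv.refl _)
    (Tuple.monotone_sort I.1) (by simpa using I.2)
  simpa [srt] using h

/-- `ghat g` is the `n`-th tensor power of `g`, on the index set of all functions. -/
noncomputable def ghat (g : Matrix (Fin k) (Fin k) ℂ) :
    Matrix (Fin n → Fin k) (Fin n → Fin k) ℂ :=
  Matrix.of fun P Q => ∏ a, g (P a) (Q a)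

lemma ghat_transpose (g : Matrix (Fin k) (Fin k) ℂ) :
    ghat (n := n) gᵀ = (ghat g)ᵀ := by
  ext P Q; simp [ghat]

lemma ghat_mul (g h : Matrix (Fin k) (Fin k) ℂ) :
    ghat (n := n) (g * h) = ghat g * ghat h := by
  ext P Q
  simp only [ghat, of_apply, mul_apply]
  rw [Fintype.prod_sum (fun a r => g (P a) r * h r (Q a))]
  exact Finset.sum_congr rfl fun R _ => by rw [Finset.prod_mul_distrib]

/-- Precomposition by a permutation, as an equivalence of tuples. -/
def pe (σ : Equiv.Perm (Fin n)) : (Fin n → Fin k) ≃ (Fin n → Fin k) where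
  toFun Q := Q ∘ σ
  invFun Q := Q ∘ σ.symm
  left_inv Q := by ext a; simp
  right_inv Q := by ext a; simp

lemma ghat_pe (g : Matrix (Fin k) (Fin k) ℂ) (σ : Equiv.Perm (Fin n)) :
    (ghat g).submatrix (pe σ) (pe σ) = ghat g := by
  ext P Q
  simp only [submatrix_apply, ghat, of_apply, pe, Equiv.coe_fn_mk, Function.comp_apply]
  exact Equiv.prod_comp σ fun b => g (P b) (Q b)

/-- The Gram matrix of the induced form on the tensor power. -/
noncomputable def Ghat (M : Matrix (Fin k) (Fin k) ℂ) :
    Matrix (Fin n → Fin k) (Fin n → Fin k) ℂ :=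
  Matrix.of fun P Q => ∑ σ : Equiv.Perm (Fin n), ∏ a, M (P a) (Q (σ a))

lemma Ghat_eq_sum (M : Matrix (Fin k) (Fin k) ℂ) :
    Ghat (n := n) M = ∑ σ : Equiv.Perm (Fin n), (ghat M).submatrix id (pe σ) := by
  ext P Q
  simp [Ghat, ghat, pe, Matrix.sum_apply]

lemma Ghat_conj (g M : Matrix (Fin k) (Fin k) ℂ) :
    Ghat (n := n) (gᵀ * M * g) = (ghat g)ᵀ * Ghat M * ghat g := by
  rw [Ghat_eq_sum, Ghat_eq_sum, Finset.mul_sum, Finset.sum_mul]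
  refine Finset.sum_congr rfl fun σ _ => ?_
  have h1 : ghat (n := n) (gᵀ * M * g) = (ghat g)ᵀ * ghat M * ghat g := by
    rw [ghat_mul, ghat_mul, ghat_transpose]
  rw [h1]
  have h2 : (ghat (n := n) M).submatrix id (pe σ) * ghat g
      = ((ghat M) * ghat g).submatrix id (pe σ) := by
    conv_lhs => rw [← ghat_pe g σ]
    exact submatrix_mul_equiv (ghat M) (ghat g) id (pe σ) (pe σ)
  have h3 : ∀ X : Matrix (Fin n → Fin k) (Fin n → Fin k) ℂ,
      (ghat g)ᵀ * X.submatrix id (pe σ) = ((ghat g)ᵀ * X).submatrix id (pe σ) := by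
    intro X
    have := submatrix_mul_equiv ((ghat (n := n) g)ᵀ) X id (Equiv.refl (Fin n → Fin k)) (pe σ)
    simpa using this
  rw [Matrix.mul_assoc ((ghat g)ᵀ) ((ghat M).submatrix id (pe σ)) (ghat g), h2, h3, Matrix.mul_assoc]

lemma Ghat_comp (M : Matrix (Fin k) (Fin k) ℂ) (P Q : Fin n → Fin k)
    (τ ρ : Equiv.Perm (Fin n)) :
    Ghat M (P ∘ τ) (Q ∘ ρ) = Ghat M P Q := by
  simp only [Ghat, of_apply, Function.comp_apply]
  calc ∑ σ : Equiv.Perm (Fin n), ∏ a, M (P (τ a)) (Q (ρ (σ a)))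
      = ∑ σ : Equiv.Perm (Fin n), ∏ a, M (P a) (Q ((ρ * σ * τ⁻¹) a)) := by
        refine Finset.sum_congr rfl fun σ _ => ?_
        rw [← Equiv.prod_comp τ (fun b => M (P b) (Q ((ρ * σ * τ⁻¹) b)))]
        refine Finset.prod_congr rfl fun a _ => ?_
        simp [Equiv.Perm.mul_apply]
    _ = ∑ σ : Equiv.Perm (Fin n), ∏ a, M (P a) (Q (σ a)) :=
        Equiv.sum_comp ((Equiv.mulLeft ρ).trans (Equiv.mulRight τ⁻¹))
          (fun π => ∏ a, M (P a) (Q (π a)))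

/-- The Gram matrix of the induced form on the monomial basis. -/
noncomputable def G (M : Matrix (Fin k) (Fin k) ℂ) : Matrix (Mono n k) (Mono n k) ℂ :=
  Matrix.of fun I J => ∑ σ : Equiv.Perm (Fin n), ∏ a, M (I.1 a) (J.1 (σ a))

lemma Ghat_apply_srt (M : Matrix (Fin k) (Fin k) ℂ) (P Q : Fin n → Fin k) :
    Ghat M P Q = G M (srt P) (srt Q) := by
  have : G M (srt P) (srt Q) = Ghat M (P ∘ Tuple.sort P) (Q ∘ Tuple.sort Q) := rfl
  rw [this, Ghat_comp]

/-- The 0-1 "symmetrization" matrix. -/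
noncomputable def Amat : Matrix (Fin n → Fin k) (Mono n k) ℂ :=
  Matrix.of fun P I => if srt P = I then 1 else 0

/-- The induced matrix on the monomial basis of a base change. -/
noncomputable def Cmat (g : Matrix (Fin k) (Fin k) ℂ) : Matrix (Mono n k) (Mono n k) ℂ :=
  Matrix.of fun I J => ∑ Q : Fin n → Fin k, if srt Q = J then ∏ a, g (I.1 a) (Q a) else 0

lemma Chat_comp (g : Matrix (Fin k) (Fin k) ℂ) (P : Fin n → Fin k)
    (τ : Equiv.Perm (Fin n)) (J : Mono n k) :
    (∑ Q : Fin n → Fin k, if srt Q = J then ∏ a, g (P (τ a)) (Q a) else 0)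
      = ∑ Q : Fin n → Fin k, if srt Q = J then ∏ a, g (P a) (Q a) else 0 := by
  rw [← Equiv.sum_comp (pe τ) (fun Q => if srt Q = J then ∏ a, g (P (τ a)) (Q a) else 0)]
  refine Finset.sum_congr rfl fun R _ => ?_
  have h1 : srt (pe τ R) = srt R := srt_comp R τ
  have h2 : (∏ a, g (P (τ a)) (pe τ R a)) = ∏ a, g (P a) (R a) :=
    Equiv.prod_comp τ fun b => g (P b) (R b)
  rw [h1, h2]

lemma ghat_mul_Amat (g : Matrix (Fin k) (Fin k) ℂ) :
    ghat (n := n) g * (Amat (n := n) (k := k)) = (Amat (n := n) (k := k)) * Cmat (n := n) g := by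
  ext P J
  simp only [mul_apply, ghat, Amat, of_apply, mul_ite, mul_one, mul_zero,
    ite_mul, one_mul, zero_mul]
  rw [Finset.sum_ite_eq Finset.univ (srt P) (fun I => Cmat (n := n) g I J)]
  simp only [Finset.mem_univ, if_true]
  have : Cmat (n := n) g (srt P) J
      = ∑ Q : Fin n → Fin k, if srt Q = J then ∏ a, g (P (Tuple.sort P a)) (Q a) else 0 := rfl
  rw [this, Chat_comp]

lemma Amat_mul_apply (X : Matrix (Mono n k) (Mono n k) ℂ) (I J : Mono n k) :
    (((Amat (n := n) (k := k)) * X : Matrix (Fin n → Fin k) (Mono n k) ℂ)) I.1 J = X I J := by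
  simp only [mul_apply, Amat, of_apply, ite_mul, one_mul, zero_mul]
  rw [Finset.sum_ite_eq Finset.univ (srt I.1) (fun I' => X I' J), srt_idem]
  simp

lemma Amat_cancel {X Y : Matrix (Mono n k) (Mono n k) ℂ}
    (h : (Amat (n := n) (k := k)) * X = (Amat (n := n) (k := k)) * Y) : X = Y := by
  ext I J
  rw [← Amat_mul_apply X I J, ← Amat_mul_apply Y I J, h]

lemma Cmat_mul (g h : Matrix (Fin k) (Fin k) ℂ) :
    Cmat (n := n) (g * h) = Cmat (n := n) g * Cmat (n := n) h := by
  apply Amat_cancel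
  rw [← ghat_mul_Amat, ghat_mul, Matrix.mul_assoc, ghat_mul_Amat h, ← Matrix.mul_assoc,
    ghat_mul_Amat g, Matrix.mul_assoc]

lemma ghat_one : ghat (n := n) (1 : Matrix (Fin k) (Fin k) ℂ) = 1 := by
  ext P Q
  simp only [ghat, of_apply, Matrix.one_apply]
  rw [Fintype.prod_ite_zero]
  simp [funext_iff]

lemma Cmat_one : Cmat (n := n) (1 : Matrix (Fin k) (Fin k) ℂ) = 1 := by
  apply Amat_cancel
  rw [← ghat_mul_Amat, ghat_one, Matrix.one_mul, Matrix.mul_one]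

lemma mul_Amat_transpose_apply (Z : Matrix (Mono n k) (Mono n k) ℂ) :
    (Z * (Amat (n := n) (k := k))ᵀ : Matrix (Mono n k) (Fin n → Fin k) ℂ)
      = Matrix.of fun I' (Q : Fin n → Fin k) => Z I' (srt Q) := by
  ext I' Q
  simp only [mul_apply, Amat, of_apply, transpose_apply, mul_ite, mul_one, mul_zero]
  rw [Finset.sum_ite_eq Finset.univ (srt Q) (fun J' => Z I' J')]
  simp

lemma Amat_conj_apply (Z : Matrix (Mono n k) (Mono n k) ℂ) (I J : Mono n k) :
    ((Amat (n := n) (k := k)) * Z * (Amat (n := n) (k := k))ᵀ : Matrix (Fin n → Fin k) (Fin n → Fin k) ℂ) I.1 J.1 = Z I J := by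
  rw [Matrix.mul_assoc, mul_Amat_transpose_apply]
  have h2 := Amat_mul_apply (Matrix.of fun I' (Q : Mono n k) => Z I' (srt Q.1)) I J
  simp only [of_apply] at h2
  rw [show ((Amat (n := n) (k := k)) * Matrix.of fun I' (Q : Fin n → Fin k) => Z I' (srt Q)
      : Matrix (Fin n → Fin k) (Fin n → Fin k) ℂ) I.1 J.1
      = ((Amat (n := n) (k := k)) * Matrix.of fun I' (Q : Mono n k) => Z I' (srt Q.1)
      : Matrix (Fin n → Fin k) (Mono n k) ℂ) I.1 J from rfl, h2, srt_idem]

lemma Amat_conj_cancel {X Y : Matrix (Mono n k) (Mono n k) ℂ}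
    (h : (Amat (n := n) (k := k)) * X * (Amat (n := n) (k := k))ᵀ = (Amat (n := n) (k := k)) * Y * (Amat (n := n) (k := k))ᵀ) : X = Y := by
  ext I J
  rw [← Amat_conj_apply X I J, ← Amat_conj_apply Y I J, h]

lemma AGA (M : Matrix (Fin k) (Fin k) ℂ) :
    (Amat (n := n) (k := k)) * G (n := n) M * (Amat (n := n) (k := k))ᵀ = Ghat M := by
  ext P Q
  rw [Matrix.mul_assoc, mul_Amat_transpose_apply]
  have h2 : ((Amat (n := n) (k := k)) * Matrix.of fun I (Q : Fin n → Fin k) => G (n := n) M I (srt Q)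
      : Matrix (Fin n → Fin k) (Fin n → Fin k) ℂ) P Q
      = G M (srt P) (srt Q) := by
    simp only [mul_apply, Amat, of_apply, ite_mul, one_mul, zero_mul]
    rw [Finset.sum_ite_eq Finset.univ (srt P) (fun I => G M I (srt Q))]
    simp
  rw [h2, Ghat_apply_srt]

lemma G_conj (g M : Matrix (Fin k) (Fin k) ℂ) :
    G (n := n) (gᵀ * M * g) = Cmat (n := n) gᵀ * G (n := n) M * (Cmat (n := n) gᵀ)ᵀ := by
  apply Amat_conj_cancel
  rw [AGA, Ghat_conj]
  have h1 : (ghat (n := n) g)ᵀ * (Amat (n := n) (k := k)) = (Amat (n := n) (k := k)) * Cmat (n := n) gᵀ := by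
    rw [← ghat_transpose, ghat_mul_Amat]
  have h2 : (Amat (n := n) (k := k))ᵀ * ghat (n := n) g = (Cmat (n := n) gᵀ)ᵀ * (Amat (n := n) (k := k))ᵀ := by
    have := congrArg Matrix.transpose h1
    simpa [Matrix.transpose_mul] using this
  rw [← AGA M]
  simp only [← Matrix.mul_assoc]
  rw [h1, Matrix.mul_assoc ((Amat (n := n) (k := k)) * Cmat (n := n) gᵀ * G (n := n) M) (Amat (n := n) (k := k))ᵀ (ghat (n := n) g), h2]
  simp only [← Matrix.mul_assoc]

lemma det_G_conj (g M : Matrix (Fin k) (Fin k) ℂ) :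
    (G (n := n) (gᵀ * M * g)).det = (Cmat (n := n) gᵀ).det ^ 2 * (G (n := n) M).det := by
  rw [G_conj, Matrix.det_mul, Matrix.det_mul, Matrix.det_transpose]
  ring
lemma Cmat_diagonal (t : Fin k → ℂ) :
    Cmat (n := n) (Matrix.diagonal t)
      = Matrix.diagonal (fun I : Mono n k => ∏ a, t (I.1 a)) := by
  ext I J
  simp only [Cmat, of_apply, Matrix.diagonal_apply]
  have h1 : ∀ Q : Fin n → Fin k,
      (if srt Q = J then ∏ a, (if I.1 a = Q a then t (I.1 a) else 0) else 0)
        = if Q = I.1 then (if I = J then ∏ a, t (I.1 a) else 0) else 0 := by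
    intro Q
    have hprod : (∏ a, (if I.1 a = Q a then t (I.1 a) else 0))
        = if I.1 = Q then ∏ a, t (I.1 a) else 0 := by
      rw [Fintype.prod_ite_zero]
      simp [funext_iff]
    by_cases hQ : Q = I.1
    · subst hQ
      rw [hprod, if_pos rfl, if_pos rfl, srt_idem]
    · rw [if_neg hQ]
      by_cases hs : srt Q = J
      · rw [if_pos hs, hprod, if_neg (fun h => hQ h.symm)]
      · rw [if_neg hs]
  rw [Finset.sum_congr rfl fun Q _ => h1 Q,
    Finset.sum_ite_eq' Finset.univ I.1 (fun _ => if I = J then ∏ a, t (I.1 a) else 0)]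
  simp

lemma det_eq_one_of_tri (M : Matrix (Mono n k) (Mono n k) ℂ) (b : Mono n k → ℤ)
    (hd : ∀ I, M I I = 1) (ho : ∀ I J, M I J ≠ 0 → I = J ∨ b I < b J) : M.det = 1 := by
  have hbt : M.BlockTriangular b := by
    intro I J hlt
    by_contra h
    rcases ho I J h with rfl | h2
    · exact lt_irrefl _ hlt
    · exact absurd h2 (not_lt.2 hlt.le)
  rw [hbt.det]
  refine Finset.prod_eq_one fun x _ => ?_
  have hblock : M.toSquareBlock b x = 1 := by
    ext i j
    by_cases hij : i = j
    · subst hij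
      simp [Matrix.toSquareBlock_def, hd, Matrix.one_apply]
    · have hz : M i.1 j.1 = 0 := by
        by_contra hcon
        rcases ho _ _ hcon with h' | h'
        · exact hij (Subtype.ext h')
        · rw [i.2, j.2] at h'
          exact lt_irrefl _ h'
      simp [Matrix.toSquareBlock_def, hz, Matrix.one_apply, hij]
  rw [hblock, Matrix.det_one]

lemma detC_aux (T : Matrix (Fin k) (Fin k) ℂ) (ρ : Fin k → ℤ)
    (hρ : Function.Injective ρ) (hdiag : ∀ x, T x x = 1)
    (hle : ∀ x y, T x y ≠ 0 → ρ x ≤ ρ y) : (Cmat (n := n) T).det = 1 := by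
  classical
  set b : Mono n k → ℤ := fun I => ∑ a, ρ (I.1 a) with hb
  have hbs : ∀ Q : Fin n → Fin k, b (srt Q) = ∑ a, ρ (Q a) := fun Q =>
    Equiv.sum_comp (Tuple.sort Q) (fun a => ρ (Q a))
  have key : ∀ (I : Mono n k) (Q : Fin n → Fin k),
      (∀ a, T (I.1 a) (Q a) ≠ 0) → b I ≤ b (srt Q) ∧ (b I = b (srt Q) → I.1 = Q) := by
    intro I Q h
    have hle' : ∀ a : Fin n, ρ (I.1 a) ≤ ρ (Q a) := fun a => hle _ _ (h a)
    rw [hbs]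
    refine ⟨Finset.sum_le_sum fun a _ => hle' a, fun he => ?_⟩
    have hpt := (Finset.sum_eq_sum_iff_of_le (fun a _ => hle' a)).1 he
    funext a
    exact hρ (hpt a (Finset.mem_univ a))
  apply det_eq_one_of_tri _ b
  · intro I
    simp only [Cmat, of_apply]
    have h1 : ∀ Q : Fin n → Fin k,
        (if srt Q = I then ∏ a, T (I.1 a) (Q a) else 0) = if Q = I.1 then 1 else 0 := by
      intro Q
      by_cases hQ : Q = I.1
      · subst hQ
        rw [if_pos (srt_idem I), if_pos rfl]
        exact Finset.prod_eq_one fun a _ => hdiag _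
      · rw [if_neg hQ]
        by_cases hs : srt Q = I
        · rw [if_pos hs]
          by_contra hP
          have hall : ∀ a, T (I.1 a) (Q a) ≠ 0 := fun a =>
            Finset.prod_ne_zero_iff.1 hP a (Finset.mem_univ a)
          exact hQ ((key I Q hall).2 (by rw [hs])).symm
        · rw [if_neg hs]
    rw [Finset.sum_congr rfl fun Q _ => h1 Q,
      Finset.sum_ite_eq' Finset.univ I.1 (fun _ => (1:ℂ))]
    simp
  · intro I J hne
    simp only [Cmat, of_apply] at hne
    obtain ⟨Q, -, hQ⟩ := Finset.exists_ne_zero_of_sum_ne_zero hne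
    have hs : srt Q = J := by
      by_contra h; rw [if_neg h] at hQ; exact hQ rfl
    rw [if_pos hs] at hQ
    have hall : ∀ a, T (I.1 a) (Q a) ≠ 0 := fun a =>
      Finset.prod_ne_zero_iff.1 hQ a (Finset.mem_univ a)
    obtain ⟨h1, h2⟩ := key I Q hall
    rw [hs] at h1 h2
    rcases eq_or_lt_of_le h1 with he | hlt
    · left
      rw [← srt_idem I, h2 he, hs]
    · right; exact hlt

lemma detC_transvection {i j : Fin k} (hij : i ≠ j) (c : ℂ) :
    (Cmat (n := n) (Matrix.transvection i j c)).det = 1 := by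
  have hdiag : ∀ x, Matrix.transvection i j c x x = 1 := by
    intro x
    simp only [Matrix.transvection, Matrix.add_apply, Matrix.one_apply_eq,
      Matrix.single]
    rw [Matrix.of_apply]
    have : ¬(i = x ∧ j = x) := fun ⟨h1, h2⟩ => hij (h1.trans h2.symm)
    rw [if_neg this, add_zero]
  have hne : ∀ x y, Matrix.transvection i j c x y ≠ 0 → x = y ∨ (x = i ∧ y = j) := by
    intro x y h
    by_contra hc
    push_neg at hc
    apply h
    simp only [Matrix.transvection, Matrix.add_apply, Matrix.single]
    rw [Matrix.one_apply_ne hc.1, Matrix.of_apply,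
      if_neg (fun ⟨h1, h2⟩ => (hc.2 h1.symm) h2.symm), add_zero]
  rcases hij.lt_or_gt with hlt | hlt
  · apply detC_aux _ (fun x : Fin k => ((x : ℕ) : ℤ)) ?_ hdiag ?_
    · intro a b h
      have h' : ((a : ℕ) : ℤ) = ((b : ℕ) : ℤ) := h
      exact Fin.ext (Int.natCast_inj.mp h')
    · intro x y h
      have hcast : ∀ u v : Fin k, u ≤ v → ((u : ℕ) : ℤ) ≤ ((v : ℕ) : ℤ) := fun u v huv => by
        exact_mod_cast huv
      rcases hne x y h with rfl | ⟨rfl, rfl⟩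
      · exact le_refl _
      · exact hcast _ _ hlt.le
  · apply detC_aux _ (fun x : Fin k => -((x : ℕ) : ℤ)) ?_ hdiag ?_
    · intro a b h
      have h' : -((a : ℕ) : ℤ) = -((b : ℕ) : ℤ) := h
      exact Fin.ext (Int.natCast_inj.mp (neg_inj.mp h'))
    · intro x y h
      have hcast : ∀ u v : Fin k, u ≤ v → -((v : ℕ) : ℤ) ≤ -((u : ℕ) : ℤ) := fun u v huv => by
        have : ((u : ℕ) : ℤ) ≤ ((v : ℕ) : ℤ) := by exact_mod_cast huv
        omega
      rcases hne x y h with rfl | ⟨rfl, rfl⟩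
      · exact le_refl _
      · exact hcast _ _ hlt.le
/-- The total multiplicity of the value `i` among all monotone tuples. -/
def Ni (n k : ℕ) (i : Fin k) : ℕ :=
  ∑ I : Mono n k, ∑ a : Fin n, if I.1 a = i then 1 else 0

/-- The bijection of monotone tuples induced by a permutation of values (relabel and re-sort). -/
def permMono (s : Equiv.Perm (Fin k)) : Mono n k ≃ Mono n k where
  toFun I := srt (s ∘ I.1)
  invFun I := srt (s.symm ∘ I.1)
  left_inv I := by
    show srt (⇑(Equiv.symm s) ∘ (srt (⇑s ∘ I.1)).1) = I
    rw [show (⇑s.symm ∘ (srt (⇑s ∘ I.1)).1) = I.1 ∘ ⇑(Tuple.sort (⇑s ∘ I.1)) from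
      funext fun a => by simp [srt], srt_comp, srt_idem]
  right_inv I := by
    show srt (⇑s ∘ (srt (⇑(Equiv.symm s) ∘ I.1)).1) = I
    rw [show (⇑s ∘ (srt (⇑s.symm ∘ I.1)).1) = I.1 ∘ ⇑(Tuple.sort (⇑s.symm ∘ I.1)) from
      funext fun a => by simp [srt], srt_comp, srt_idem]

lemma Ni_perm (s : Equiv.Perm (Fin k)) (i : Fin k) : Ni n k (s i) = Ni n k i := by
  unfold Ni
  rw [← Equiv.sum_comp (permMono s) (fun I : Mono n k => ∑ a, if I.1 a = s i then 1 else 0)]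
  refine Finset.sum_congr rfl fun I _ => ?_
  rw [← Equiv.sum_comp (Tuple.sort (⇑s ∘ I.1)) (fun a => if I.1 a = i then (1:ℕ) else 0)]
  refine Finset.sum_congr rfl fun a _ => ?_
  simp only [permMono, Equiv.coe_fn_mk, srt, Function.comp_apply]
  simp [s.injective.eq_iff]

lemma Ni_const (i j : Fin k) : Ni n k i = Ni n k j := by
  have := Ni_perm (n := n) (Equiv.swap i j) j
  rwa [Equiv.swap_apply_right] at this

lemma sum_Ni : ∑ i : Fin k, Ni n k i = n * Fintype.card (Mono n k) := by
  unfold Ni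
  rw [Finset.sum_comm]
  have : ∀ I : Mono n k, ∑ i : Fin k, ∑ a : Fin n, (if I.1 a = i then (1:ℕ) else 0) = n := by
    intro I
    rw [Finset.sum_comm]
    have : ∀ a : Fin n, ∑ i : Fin k, (if I.1 a = i then (1:ℕ) else 0) = 1 := by
      intro a
      rw [Finset.sum_ite_eq Finset.univ (I.1 a) (fun _ => (1:ℕ))]
      simp
    rw [Finset.sum_congr rfl fun a _ => this a]
    simp
  rw [Finset.sum_congr rfl fun I _ => this I]
  simp [mul_comm]

/-- Monotone tuples are equivalent to multisets. -/
noncomputable def monoSymEquiv : Mono n k ≃ Sym (Fin k) n :=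
  Equiv.ofBijective (fun I => ⟨(List.ofFn I.1 : Multiset (Fin k)), by simp⟩)
    ⟨by
      intro I J h
      have h2 : (List.ofFn I.1 : Multiset (Fin k)) = (List.ofFn J.1 : Multiset (Fin k)) :=
        congrArg Subtype.val h
      have h3 : List.ofFn I.1 = List.ofFn J.1 :=
        List.Perm.eq_of_sortedLE I.2.sortedLE_ofFn J.2.sortedLE_ofFn (Multiset.coe_eq_coe.1 h2)
      exact Subtype.ext (List.ofFn_injective h3),
     by
      intro s
      have hlen : (Multiset.sort s.1 (· ≤ ·)).length = n := by
        rw [Multiset.length_sort, s.2]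
      refine ⟨⟨fun a => (Multiset.sort s.1 (· ≤ ·)).get (Fin.cast hlen.symm a), ?_⟩, ?_⟩
      · intro a b hab
        exact List.Pairwise.rel_get_of_le (Multiset.pairwise_sort _ _) (by exact hab)
      · apply Subtype.ext
        have hofn : (List.ofFn fun a : Fin n =>
            (Multiset.sort s.1 (· ≤ ·)).get (Fin.cast hlen.symm a))
            = Multiset.sort s.1 (· ≤ ·) := by
          apply List.ext_get (by simp [hlen])
          intro i h1 h2
          simp [List.get_ofFn]
          rfl
        show ((List.ofFn fun a : Fin n =>
            (Multiset.sort s.1 (· ≤ ·)).get (Fin.cast hlen.symm a) : List (Fin k))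
            : Multiset (Fin k)) = s.1
        rw [hofn]
        exact Multiset.sort_eq _ _⟩

lemma card_mono : Fintype.card (Mono n k) = (n + k - 1).choose n := by
  rw [Fintype.card_congr (monoSymEquiv (n := n) (k := k)), Sym.card_sym_eq_multichoose,
    Fintype.card_fin, Nat.multichoose_eq, Nat.add_comm k n]

lemma choose_identity (n k : ℕ) : k * ((n + k - 1).choose k) = n * ((n + k - 1).choose n) := by
  rcases Nat.eq_zero_or_pos k with rfl | hk
  · rcases Nat.eq_zero_or_pos n with rfl | hn
    · simp
    · rw [Nat.zero_mul, Nat.add_zero, Nat.choose_eq_zero_of_lt (by omega), Nat.mul_zero]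
  rcases Nat.eq_zero_or_pos n with rfl | hn
  · rw [Nat.zero_add, Nat.choose_eq_zero_of_lt (by omega), Nat.mul_zero, Nat.zero_mul]
  obtain ⟨n', rfl⟩ : ∃ n', n = n' + 1 := ⟨n - 1, by omega⟩
  obtain ⟨k', rfl⟩ : ∃ k', k = k' + 1 := ⟨k - 1, by omega⟩
  have harg : n' + 1 + (k' + 1) - 1 = n' + k' + 1 := by omega
  rw [harg]
  have h1 : (n' + k' + 1) * ((n' + k').choose k') = (n' + k' + 1).choose (k' + 1) * (k' + 1) :=
    Nat.add_one_mul_choose_eq (n' + k') k'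
  have h2 : (k' + n' + 1) * ((k' + n').choose n') = (k' + n' + 1).choose (n' + 1) * (n' + 1) :=
    Nat.add_one_mul_choose_eq (k' + n') n'
  have h3 : (n' + k').choose k' = (n' + k').choose n' := by
    rw [← Nat.choose_symm (by omega : k' ≤ n' + k')]
    congr 1
    omega
  have harg2 : k' + n' = n' + k' := by omega
  rw [harg2] at h2
  calc (k' + 1) * ((n' + k' + 1).choose (k' + 1))
      = (n' + k' + 1) * ((n' + k').choose k') := by rw [h1]; ring
    _ = (n' + k' + 1) * ((n' + k').choose n') := by rw [h3]
    _ = (n' + 1) * ((n' + k' + 1).choose (n' + 1)) := by rw [h2]; ring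

lemma Ni_val (hk : k ≠ 0) (i : Fin k) : Ni n k i = (n + k - 1).choose k := by
  have h1 : k * Ni n k i = ∑ j : Fin k, Ni n k j := by
    rw [Finset.sum_congr rfl fun j _ => Ni_const j i]
    simp [mul_comm]
  have h2 : k * Ni n k i = k * ((n + k - 1).choose k) := by
    rw [h1, sum_Ni, card_mono, choose_identity]
  exact Nat.eq_of_mul_eq_mul_left (Nat.pos_of_ne_zero hk) h2

lemma prod_prod_eq (hk : k ≠ 0) (d : Fin k → ℂ) :
    ∏ I : Mono n k, ∏ a, d (I.1 a) = (∏ p, d p) ^ ((n + k - 1).choose k) := by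
  have step1 : ∀ I : Mono n k, (∏ a, d (I.1 a))
      = ∏ p : Fin k, d p ^ (∑ a : Fin n, if I.1 a = p then 1 else 0) := by
    intro I
    have ha : ∀ a : Fin n, d (I.1 a) = ∏ p : Fin k, d p ^ (if I.1 a = p then 1 else 0) := by
      intro a
      rw [show (∏ p : Fin k, d p ^ (if I.1 a = p then 1 else 0))
          = ∏ p : Fin k, (if I.1 a = p then d p else 1) from
        Finset.prod_congr rfl fun p _ => by split <;> simp,
        Finset.prod_ite_eq Finset.univ (I.1 a) (fun p => d p)]
      simp
    rw [Finset.prod_congr rfl fun a _ => ha a, Finset.prod_comm]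
    exact Finset.prod_congr rfl fun p _ => Finset.prod_pow_eq_pow_sum Finset.univ _ _
  rw [Finset.prod_congr rfl fun I _ => step1 I, Finset.prod_comm]
  have hp : ∀ p : Fin k, (∏ I : Mono n k, d p ^ (∑ a : Fin n, if I.1 a = p then 1 else 0))
      = d p ^ ((n + k - 1).choose k) := by
    intro p
    rw [Finset.prod_pow_eq_pow_sum Finset.univ _ _,
      show (∑ I : Mono n k, ∑ a : Fin n, if I.1 a = p then 1 else 0) = Ni n k p from rfl,
      Ni_val hk p]
  rw [Finset.prod_congr rfl fun p _ => hp p, Finset.prod_pow]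

lemma detC (hk : k ≠ 0) (g : Matrix (Fin k) (Fin k) ℂ) :
    (Cmat (n := n) g).det = g.det ^ ((n + k - 1).choose k) := by
  obtain ⟨L, L', D, hg⟩ := Matrix.Pivot.exists_list_transvec_mul_diagonal_mul_list_transvec g
  have hCL : ∀ (L : List (Matrix.TransvectionStruct (Fin k) ℂ)),
      (Cmat (n := n) (List.prod (L.map Matrix.TransvectionStruct.toMatrix))).det = 1 := by
    intro L
    induction L with
    | nil => simp [Cmat_one]
    | cons t L ih =>
        rw [List.map_cons, List.prod_cons, Cmat_mul, Matrix.det_mul, ih, mul_one]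
        exact detC_transvection t.hij t.c
  rw [hg, Cmat_mul, Cmat_mul, Matrix.det_mul, Matrix.det_mul, hCL, hCL, Cmat_diagonal,
    Matrix.det_diagonal, Matrix.det_mul, Matrix.det_mul, Matrix.det_diagonal,
    Matrix.TransvectionStruct.det_toMatrix_prod, Matrix.TransvectionStruct.det_toMatrix_prod,
    prod_prod_eq hk]
  ring
/-- The (complex-valued) size of the stabilizer of a monotone tuple. -/
noncomputable def stabC (I : Mono n k) : ℂ :=
  ∑ σ : Equiv.Perm (Fin n), if I.1 = I.1 ∘ σ then 1 else 0

lemma G_diagonal (d : Fin k → ℂ) :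
    G (n := n) (Matrix.diagonal d)
      = Matrix.diagonal (fun I : Mono n k => stabC I * ∏ a, d (I.1 a)) := by
  ext I J
  simp only [G, of_apply, Matrix.diagonal_apply]
  have hterm : ∀ σ : Equiv.Perm (Fin n),
      (∏ a, (if I.1 a = J.1 (σ a) then d (I.1 a) else 0))
        = if I.1 = J.1 ∘ ⇑σ then ∏ a, d (I.1 a) else 0 := by
    intro σ
    rw [Fintype.prod_ite_zero]
    simp [funext_iff]
  rw [Finset.sum_congr rfl fun σ _ => hterm σ]
  by_cases hIJ : I = J
  · subst hIJ
    rw [if_pos rfl, stabC, Finset.sum_mul]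
    refine Finset.sum_congr rfl fun σ _ => ?_
    split <;> simp
  · rw [if_neg hIJ]
    refine Finset.sum_eq_zero fun σ _ => ?_
    rw [if_neg]
    intro hcon
    apply hIJ
    have hmono : Monotone (J.1 ∘ σ) := hcon ▸ I.2
    have huniq : J.1 ∘ σ = J.1 ∘ (Equiv.refl (Fin n)) :=
      Tuple.unique_monotone hmono (by simpa using J.2)
    apply Subtype.ext
    rw [hcon, huniq]
    rfl

lemma main_matrix (hk : k ≠ 0) (M : Matrix (Fin k) (Fin k) ℂ)
    (hM : ∀ i j, M i j = M j i) :
    (G (n := n) M).det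
      = (∏ I : Mono n k, stabC I) * M.det ^ ((n + k - 1).choose k) := by
  haveI : Invertible (2 : ℂ) := invertibleOfNonzero two_ne_zero
  set B : LinearMap.BilinForm ℂ (Fin k → ℂ) := Matrix.toLinearMap₂' ℂ M with hB
  have hsymm : B.IsSymm := by
    refine ⟨fun x y => ?_⟩
    simp only [hB, Matrix.toLinearMap₂'_apply, RingHom.id_apply, smul_eq_mul]
    rw [Finset.sum_comm]
    exact Finset.sum_congr rfl fun p _ => Finset.sum_congr rfl fun q _ => by
      rw [hM q p]; ring
  obtain ⟨w0, hw0⟩ := LinearMap.BilinForm.exists_orthogonal_basis (LinearMap.BilinForm.isSymm_iff.1 hsymm)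
  have hfr : Module.finrank ℂ (Fin k → ℂ) = k := by
    rw [Module.finrank_pi, Fintype.card_fin]
  let w : Module.Basis (Fin k) ℂ (Fin k → ℂ) := w0.reindex (finCongr hfr)
  have hw : ∀ i j : Fin k, i ≠ j → B (w i) (w j) = 0 := by
    intro i j hij
    have : w i = w0 ((finCongr hfr).symm i) := Module.Basis.reindex_apply w0 (finCongr hfr) i
    rw [Module.Basis.reindex_apply, Module.Basis.reindex_apply]
    exact hw0 (fun h => hij (by simpa using congrArg (finCongr hfr) h))
  set h : Matrix (Fin k) (Fin k) ℂ := Matrix.of fun p i => w i p with hh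
  have hdet : h.det ≠ 0 := by
    have he : h = (Pi.basisFun ℂ (Fin k)).toMatrix w := by
      ext p i
      rw [Module.Basis.toMatrix_apply, Pi.basisFun_repr, hh, Matrix.of_apply]
    haveI := (Pi.basisFun ℂ (Fin k)).invertibleToMatrix w
    rw [he]
    exact (Matrix.isUnit_det_of_invertible _).ne_zero
  set d : Fin k → ℂ := fun p => B (w p) (w p) with hd
  have key : hᵀ * M * h = Matrix.diagonal d := by
    ext i j
    have hBij : (hᵀ * M * h : Matrix (Fin k) (Fin k) ℂ) i j = B (w i) (w j) := by
      rw [hB, Matrix.toLinearMap₂'_apply]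
      rw [Matrix.mul_apply]
      simp only [Matrix.mul_apply, Matrix.transpose_apply, hh, Matrix.of_apply,
        smul_eq_mul, Finset.sum_mul]
      rw [Finset.sum_comm]
      exact Finset.sum_congr rfl fun p _ => Finset.sum_congr rfl fun q _ => by ring
    rw [hBij]
    by_cases hij : i = j
    · subst hij
      rw [Matrix.diagonal_apply_eq]
    · rw [hw i j hij, Matrix.diagonal_apply_ne _ hij]
  have h1 : (G (n := n) (Matrix.diagonal d)).det
      = (Cmat (n := n) hᵀ).det ^ 2 * (G (n := n) M).det := by
    rw [← key, det_G_conj]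
  have h2 : (G (n := n) (Matrix.diagonal d)).det
      = (∏ I : Mono n k, stabC I) * (∏ p, d p) ^ ((n + k - 1).choose k) := by
    rw [G_diagonal, Matrix.det_diagonal, Finset.prod_mul_distrib, prod_prod_eq hk]
  have h3 : ∏ p, d p = h.det ^ 2 * M.det := by
    rw [← Matrix.det_diagonal, ← key, Matrix.det_mul, Matrix.det_mul, Matrix.det_transpose]
    ring
  have h4 : (Cmat (n := n) hᵀ).det = h.det ^ ((n + k - 1).choose k) := by
    rw [detC hk, Matrix.det_transpose]
  have hE := h1.symm.trans h2
  rw [h4, h3] at hE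
  have hcan : (h.det ^ ((n + k - 1).choose k)) ^ 2 ≠ 0 := pow_ne_zero _ (pow_ne_zero _ hdet)
  apply mul_left_cancel₀ hcan
  rw [hE]
  ring

end SPaux

/-- There is a constant `c(n,k)`, depending only on `n` and `k`, such that for every complex
vector space `V` with a symmetric bilinear form `B` and basis `v₁, ..., v_k`, the determinant
of the Gram matrix of the monomial basis of the `n`-th symmetric power `Sⁿ(V)`
(with the induced form `(v_{i₁}⋯v_{iₙ}, v_{j₁}⋯v_{jₙ}) = ∑_{σ ∈ Sₙ} ∏ₐ (v_{iₐ}, v_{j_{σ(a)}})`)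
equals `c(n,k) · (det M_v)^{C(n+k-1, k)}`, where `M_v` is the Gram matrix of `v₁, ..., v_k`. -/
theorem stmt3 (n k : ℕ) :
    ∃ c : ℂ, ∀ (V : Type) [AddCommGroup V] [Module ℂ V]
      (B : LinearMap.BilinForm ℂ V), (∀ x y, B x y = B y x) →
      ∀ v : Module.Basis (Fin k) ℂ V,
      (Matrix.of fun I J : {f : Fin n → Fin k // Monotone f} =>
          ∑ σ : Equiv.Perm (Fin n), ∏ a : Fin n, B (v (I.1 a)) (v (J.1 (σ a)))).det
        = c * ((Matrix.of fun i j : Fin k => B (v i) (v j)).det) ^ ((n + k - 1).choose k) := by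
  by_cases hk : k = 0
  · subst hk
    refine ⟨1, ?_⟩
    intro V _ _ B hB v
    rw [one_mul]
    have hM1 : (Matrix.of fun i j : Fin 0 => B (v i) (v j)) = 1 := Subsingleton.elim _ _
    rw [hM1, Matrix.det_one, one_pow]
    rcases Nat.eq_zero_or_pos n with rfl | hn
    · haveI : Unique {f : Fin 0 → Fin 0 // Monotone f} :=
        ⟨⟨⟨Fin.elim0, fun a => a.elim0⟩⟩, fun f => Subtype.ext (funext fun a => a.elim0)⟩
      rw [Matrix.det_unique]
      simp
    · haveI : IsEmpty {f : Fin n → Fin 0 // Monotone f} :=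
        ⟨fun I => (I.1 ⟨0, hn⟩).elim0⟩
      rw [Matrix.det_isEmpty]
  · refine ⟨∏ I : SPaux.Mono n k, SPaux.stabC I, ?_⟩
    intro V _ _ B hB v
    exact SPaux.main_matrix hk (Matrix.of fun i j => B (v i) (v j))
      (fun i j => hB (v i) (v j))
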